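/- arXiv:2108.10500 — 2 statements merged into one kernel-verified Lean document; each statement's English description precedes it below -/
import Mathlib

section
/- Fix K > 0 and w ∈ ℝ. Let S = {z ∈ ℂ : 0 < Im z < K} be the open horizontal strip of height K. Then the function h : S → ℝ defined by h(z) = (1/K)·Im( 1 / (1 − exp(π(z − w)/K)) ) satisfies: (i) h is harmonic on S; (ii) h is strictly positive on S; (iii) h extends continuously to the closure of S minus {w}, and this extension vanishes at every boundary point of S other than w; (iv) there exists r > 0 such that z ↦ h(z) − (1/π)·|Im(1/(z − w))| is bounded on S ∩ B(w, r). -/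
open Set Metric Filter Complex Topology

noncomputable section

/-- A function `f : ℂ → ℝ` is harmonic on an open set `U ⊆ ℂ ≅ ℝ²` if it is `C²` there
with vanishing Laplacian. -/
def IsHarmonicOn (f : ℂ → ℝ) (U : Set ℂ) : Prop :=
  ContDiffOn ℝ 2 f U ∧ ∀ z ∈ U,
    (iteratedFDeriv ℝ 2 f z) ![1, 1] + (iteratedFDeriv ℝ 2 f z) ![Complex.I, Complex.I] = 0

noncomputable def Lmap (c : ℝ) : ℂ →L[ℝ] ℂ →L[ℝ] ℝ :=
  c • ((ContinuousLinearMap.compL ℝ ℂ ℂ ℝ Complex.imCLM).comp (ContinuousLinearMap.mul ℝ ℂ))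

lemma Lmap_apply (c : ℝ) (a v : ℂ) : Lmap c a v = c * (a * v).im := by simp [Lmap]

lemma isHarmonicOn_const_mul_im (c : ℝ) (f : ℂ → ℂ) (U : Set ℂ) (hU : IsOpen U)
    (hf : DifferentiableOn ℂ f U) : IsHarmonicOn (fun z => c * (f z).im) U := by
  have hA : AnalyticOnNhd ℂ f U := hf.analyticOnNhd hU
  have hA' : AnalyticOnNhd ℂ (deriv f) U := hA.deriv
  constructor
  · have h1 : ContDiffOn ℝ 2 f U := ((hf.contDiffOn hU : ContDiffOn ℂ 2 f U)).restrict_scalars ℝ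
    exact contDiffOn_const.mul (Complex.imCLM.contDiff.comp_contDiffOn h1)
  · intro z hz
    have key : ∀ x ∈ U, HasFDerivAt (fun y => c * (f y).im) (Lmap c (deriv f x)) x := by
      intro x hx
      have h1 : HasFDerivAt f
          (((1 : ℂ →L[ℂ] ℂ).smulRight (deriv f x)).restrictScalars ℝ) x :=
        ((hA x hx).differentiableAt.hasDerivAt.hasFDerivAt).restrictScalars ℝ
      have h2 := (Complex.imCLM.hasFDerivAt.comp x h1).const_mul c
      refine h2.congr_fderiv ?_
      ext v
      simp [Lmap, mul_comm]
    have heq : fderiv ℝ (fun y => c * (f y).im) =ᶠ[nhds z] fun x => Lmap c (deriv f x) := by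
      filter_upwards [hU.mem_nhds hz] with x hx using (key x hx).fderiv
    have hf1 : HasFDerivAt (deriv f)
        (((1 : ℂ →L[ℂ] ℂ).smulRight (deriv (deriv f) z)).restrictScalars ℝ) z :=
      ((hA' z hz).differentiableAt.hasDerivAt.hasFDerivAt).restrictScalars ℝ
    have h3 : HasFDerivAt (fun x => Lmap c (deriv f x))
        ((Lmap c).comp (((1 : ℂ →L[ℂ] ℂ).smulRight (deriv (deriv f) z)).restrictScalars ℝ)) z :=
      (Lmap c).hasFDerivAt.comp z hf1
    have h4 : fderiv ℝ (fderiv ℝ (fun y => c * (f y).im)) z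
        = (Lmap c).comp (((1 : ℂ →L[ℂ] ℂ).smulRight (deriv (deriv f) z)).restrictScalars ℝ) := by
      rw [heq.fderiv_eq, h3.fderiv]
    rw [iteratedFDeriv_two_apply, iteratedFDeriv_two_apply, h4]
    simp only [Matrix.cons_val_zero, Matrix.cons_val_one, Matrix.head_cons,
      ContinuousLinearMap.coe_comp', Function.comp_apply,
      ContinuousLinearMap.coe_restrictScalars', ContinuousLinearMap.smulRight_apply,
      ContinuousLinearMap.one_apply, smul_eq_mul, Lmap_apply]
    have hI : Complex.I * deriv (deriv f) z * Complex.I = -(deriv (deriv f) z) := by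
      rw [mul_comm Complex.I (deriv (deriv f) z), mul_assoc, Complex.I_mul_I, mul_neg_one]
    rw [hI, one_mul, mul_one, Complex.neg_im]
    ring


lemma strip_exp_ne_one (K : ℝ) (hK : 0 < K) (w : ℝ) {z : ℂ}
    (h0 : 0 ≤ z.im) (h1 : z.im ≤ K) (hzw : z ≠ (w : ℂ)) :
    1 - Complex.exp ((Real.pi : ℂ) * (z - (w : ℂ)) / (K : ℂ)) ≠ 0 := by
  intro hcon
  have h2 : Complex.exp ((Real.pi : ℂ) * (z - (w : ℂ)) / (K : ℂ)) = 1 := by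
    linear_combination -hcon
  rw [Complex.exp_eq_one_iff] at h2
  obtain ⟨n, hn⟩ := h2
  have hKne : (K : ℂ) ≠ 0 := Complex.ofReal_ne_zero.2 hK.ne'
  have hπ : (Real.pi : ℂ) ≠ 0 := Complex.ofReal_ne_zero.2 Real.pi_ne_zero
  have hzeq : z = (w : ℂ) + (n : ℂ) * (2 * (K : ℂ)) * Complex.I := by
    field_simp at hn
    apply mul_left_cancel₀ hπ
    linear_combination (Real.pi : ℂ) * hn
  have him : z.im = 2 * K * (n : ℝ) := by
    rw [hzeq]; simp; ring
  rw [him] at h0 h1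
  have hn0 : n = 0 := by
    have hge : (0 : ℝ) ≤ (n : ℝ) := by nlinarith
    have hlt : (n : ℝ) < 1 := by nlinarith
    have := (by exact_mod_cast hge : (0:ℤ) ≤ n)
    have := (by exact_mod_cast hlt : n < 1)
    omega
  rw [hn0] at hzeq
  simp at hzeq
  exact hzw hzeq


lemma exp_strip_im (K : ℝ) (w : ℝ) (z : ℂ) :
    (Complex.exp ((Real.pi : ℂ) * (z - (w : ℂ)) / (K : ℂ))).im
      = Real.exp (Real.pi / K * (z.re - w)) * Real.sin (Real.pi / K * z.im) := by
  have hu : (Real.pi : ℂ) * (z - (w : ℂ)) / (K : ℂ) = ((Real.pi / K : ℝ) : ℂ) * (z - (w : ℂ)) := by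
    push_cast; ring
  rw [hu, Complex.exp_im]
  congr 1
  · congr 1
    simp [Complex.mul_re]
  · congr 1
    simp [Complex.mul_im]

lemma inv_one_sub_im (E : ℂ) : (1 / (1 - E)).im = E.im / Complex.normSq (1 - E) := by
  rw [one_div, Complex.inv_im]
  simp [neg_div]

theorem strip_poisson_kernel (K : ℝ) (hK : 0 < K) (w : ℝ) :
    let S : Set ℂ := {z | 0 < z.im ∧ z.im < K}
    let h : ℂ → ℝ := fun z =>
      (1 / K) * (1 / (1 - Complex.exp ((Real.pi : ℂ) * (z - (w : ℂ)) / (K : ℂ)))).im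
    -- (i) harmonic
    IsHarmonicOn h S ∧
    -- (ii) strictly positive
    (∀ z ∈ S, 0 < h z) ∧
    -- (iii) continuous extension to cl(S) \ {w} vanishing on the boundary off w
    (∃ H : ℂ → ℝ, ContinuousOn H (closure S \ {(w : ℂ)}) ∧
      (∀ z ∈ S, H z = h z) ∧
      (∀ z ∈ frontier S \ {(w : ℂ)}, H z = 0)) ∧
    -- (iv) bounded difference with |Im 1/(z-w)|/π near w
    (∃ r > 0, ∃ C : ℝ, ∀ z ∈ S ∩ ball (w : ℂ) r,
      _root_.abs ((h z - (1 / Real.pi) * |(1 / (z - (w : ℂ))).im| : ℝ)) ≤ C) := by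
  intro S h
  have hKne : (K : ℂ) ≠ 0 := Complex.ofReal_ne_zero.2 hK.ne'
  have hπpos := Real.pi_pos
  have hπ : (Real.pi : ℂ) ≠ 0 := Complex.ofReal_ne_zero.2 Real.pi_ne_zero
  have hSopen : IsOpen S := by
    have : S = Complex.im ⁻¹' (Ioo 0 K) := rfl
    rw [this]; exact isOpen_Ioo.preimage Complex.continuous_im
  have hSne : ∀ z ∈ S, z ≠ (w : ℂ) := by
    intro z hz hcon
    rw [hcon] at hz
    simp only [S, mem_setOf_eq, Complex.ofReal_im] at hz
    exact lt_irrefl 0 hz.1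
  have hne : ∀ z ∈ S, 1 - Complex.exp ((Real.pi : ℂ) * (z - (w : ℂ)) / (K : ℂ)) ≠ 0 :=
    fun z hz => strip_exp_ne_one K hK w hz.1.le hz.2.le (hSne z hz)
  have hcl : closure S ⊆ {z : ℂ | 0 ≤ z.im ∧ z.im ≤ K} := by
    apply closure_minimal
    · intro z hz
      exact ⟨hz.1.le, hz.2.le⟩
    have : {z : ℂ | 0 ≤ z.im ∧ z.im ≤ K} = Complex.im ⁻¹' (Icc 0 K) := rfl
    rw [this]; exact isClosed_Icc.preimage Complex.continuous_im
  have hdiffden : Differentiable ℂ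
      (fun z : ℂ => 1 - Complex.exp ((Real.pi : ℂ) * (z - (w : ℂ)) / (K : ℂ))) := by
    apply (differentiable_const _).sub
    apply Complex.differentiable_exp.comp
    exact ((differentiable_id.sub_const _).const_mul _).div_const _
  refine ⟨?_, ?_, ?_, ?_⟩
  · -- (i) harmonic
    apply isHarmonicOn_const_mul_im
    · exact hSopen
    · exact DifferentiableOn.div (differentiableOn_const 1) hdiffden.differentiableOn hne
  · -- (ii) positivity
    intro z hz
    show 0 < (1 / K) * _
    rw [inv_one_sub_im, exp_strip_im]
    have hs : 0 < Real.sin (Real.pi / K * z.im) := by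
      apply Real.sin_pos_of_pos_of_lt_pi
      · exact mul_pos (div_pos hπpos hK) hz.1
      · have h2 : Real.pi / K * z.im < Real.pi / K * K :=
          mul_lt_mul_of_pos_left hz.2 (div_pos hπpos hK)
        rwa [div_mul_cancel₀ _ hK.ne'] at h2
    have hnq : 0 < Complex.normSq (1 - Complex.exp ((Real.pi : ℂ) * (z - (w : ℂ)) / (K : ℂ))) :=
      Complex.normSq_pos.2 (hne z hz)
    positivity
  · -- (iii) continuous extension
    refine ⟨h, ?_, fun z _ => rfl, ?_⟩
    · apply ContinuousOn.mul continuousOn_const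
      apply Complex.continuous_im.comp_continuousOn
      apply ContinuousOn.div continuousOn_const hdiffden.continuous.continuousOn
      intro z hz
      have hz1 := hcl hz.1
      exact strip_exp_ne_one K hK w hz1.1 hz1.2 (by simpa using hz.2)
    · intro z hz
      have hzS : z ∈ closure S \ S := by
        have h5 := hz.1
        rwa [hSopen.frontier_eq] at h5
      have hz1 := hcl hzS.1
      have him : z.im = 0 ∨ z.im = K := by
        by_contra hcon
        push_neg at hcon
        have hzmem : z ∈ S := ⟨lt_of_le_of_ne hz1.1 (Ne.symm hcon.1), lt_of_le_of_ne hz1.2 hcon.2⟩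
        exact hzS.2 hzmem
      show (1 / K) * _ = 0
      rw [inv_one_sub_im, exp_strip_im]
      rcases him with h0 | h0 <;> rw [h0]
      · rw [mul_zero, Real.sin_zero]; ring
      · rw [show Real.pi / K * K = Real.pi by field_simp, Real.sin_pi]; ring
  · -- (iv) bounded difference
    refine ⟨K / (2 * Real.pi), by positivity, 2 / K, ?_⟩
    rintro z ⟨hzS, hzb⟩
    have hzw : z ≠ (w : ℂ) := hSne z hzS
    have hzw' : z - (w : ℂ) ≠ 0 := sub_ne_zero.2 hzw
    show _root_.abs ((1 / K) * (1 / (1 - Complex.exp ((Real.pi : ℂ) * (z - (w : ℂ)) / (K : ℂ)))).im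
      - (1 / Real.pi) * |(1 / (z - (w : ℂ))).im|) ≤ 2 / K
    set u : ℂ := (Real.pi : ℂ) * (z - (w : ℂ)) / (K : ℂ) with hu_def
    have hu0 : u ≠ 0 := div_ne_zero (mul_ne_zero hπ hzw') hKne
    have habsu : ‖u‖ ≤ 1 / 2 := by
      have hd : ‖z - (w : ℂ)‖ < K / (2 * Real.pi) := by
        rw [← Complex.dist_eq]; exact mem_ball.1 hzb
      have habse : ‖u‖ = Real.pi * ‖z - (w : ℂ)‖ / K := by
        rw [hu_def, norm_div, norm_mul, Complex.norm_real, Complex.norm_real,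
          Real.norm_of_nonneg hπpos.le, Real.norm_of_nonneg hK.le]
      have h6 := mul_lt_mul_of_pos_left hd hπpos
      rw [show Real.pi * (K / (2 * Real.pi)) = K / 2 by field_simp] at h6
      rw [habse, div_le_iff₀ hK]
      linarith
    have hexp : ‖Complex.exp u - 1 - u‖ ≤ ‖u‖ ^ 2 :=
      Complex.norm_exp_sub_one_sub_id_le (le_trans habsu (by norm_num))
    have hupos : 0 < ‖u‖ := norm_pos_iff.mpr hu0
    have hlow : ‖u‖ / 2 ≤ ‖1 - Complex.exp u‖ := by
      have h1 : ‖u‖ ≤ ‖1 - Complex.exp u‖ + ‖u‖ ^ 2 := by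
        calc ‖u‖ = ‖(1 - Complex.exp u) + (Complex.exp u - 1 - u)‖ := by
              rw [show (1 - Complex.exp u) + (Complex.exp u - 1 - u) = -u by ring,
                norm_neg]
          _ ≤ ‖1 - Complex.exp u‖ + ‖Complex.exp u - 1 - u‖ :=
              norm_add_le _ _
          _ ≤ _ := by linarith
      nlinarith
    have hne2 : (1 : ℂ) - Complex.exp u ≠ 0 := by
      intro hcon
      rw [hcon, norm_zero] at hlow
      linarith
    have hg : ‖(1 - Complex.exp u)⁻¹ + u⁻¹‖ ≤ 2 := by
      have hid : (1 - Complex.exp u)⁻¹ + u⁻¹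
          = (u + 1 - Complex.exp u) / (u * (1 - Complex.exp u)) := by
        field_simp
        ring
      have hnum : ‖u + 1 - Complex.exp u‖ ≤ ‖u‖ ^ 2 := by
        rw [show u + 1 - Complex.exp u = -(Complex.exp u - 1 - u) by ring, norm_neg]
        exact hexp
      rw [hid, norm_div, norm_mul,
        div_le_iff₀ (mul_pos hupos (lt_of_lt_of_le (by positivity) hlow))]
      nlinarith [mul_le_mul_of_nonneg_left hlow hupos.le]
    have hnq : 0 < Complex.normSq (z - (w : ℂ)) := Complex.normSq_pos.2 hzw'
    have key : (1 / K) * (1 / (1 - Complex.exp u)).im - (1 / Real.pi) * |(1 / (z - (w : ℂ))).im|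
        = (1 / K) * (((1 - Complex.exp u)⁻¹ + u⁻¹).im) := by
      have him1 : (1 / (z - (w : ℂ))).im = -z.im / Complex.normSq (z - (w : ℂ)) := by
        rw [one_div, Complex.inv_im]
        congr 2
        simp
      have habs2 : |(1 / (z - (w : ℂ))).im| = z.im / Complex.normSq (z - (w : ℂ)) := by
        rw [him1, abs_of_nonpos (div_nonpos_of_nonpos_of_nonneg (by linarith [hzS.1]) hnq.le)]
        ring
      have hu' : u = ((Real.pi / K : ℝ) : ℂ) * (z - (w : ℂ)) := by rw [hu_def]; push_cast; ring
      have himu : u.im = Real.pi / K * z.im := by rw [hu']; simp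
      have hnsu : Complex.normSq u = (Real.pi / K) ^ 2 * Complex.normSq (z - (w : ℂ)) := by
        rw [hu', Complex.normSq_mul, Complex.normSq_ofReal]; ring
      have hinvu : (u⁻¹).im = -z.im * (K / Real.pi) / Complex.normSq (z - (w : ℂ)) := by
        rw [Complex.inv_im, himu, hnsu]
        field_simp
      rw [habs2, Complex.add_im, hinvu, one_div]
      field_simp
      ring
    rw [key, abs_mul, abs_of_pos (show (0:ℝ) < 1 / K by positivity)]
    have hle : |((1 - Complex.exp u)⁻¹ + u⁻¹).im| ≤ 2 :=
      le_trans (Complex.abs_im_le_norm _) hg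
    calc 1 / K * |((1 - Complex.exp u)⁻¹ + u⁻¹).im| ≤ 1 / K * 2 :=
          mul_le_mul_of_nonneg_left hle (by positivity)
      _ = 2 / K := by ring
end
end

section
/- Let a < b be real numbers and let J, L : (a, b) → ℝ be infinitely differentiable functions. Assume: (i) L has only finitely many zeros in (a, b); (ii) J is not identically zero on (a, b); (iii) for every x ∈ (a, b), L is integrable on (x, b) and the function r ↦ J(r)·exp( ∫_x^r L(s) ds ) is integrable on (x, b). Define v(x) = J(x) + L(x)·∫_x^b J(r)·exp( ∫_x^r L(s) ds ) dr for x ∈ (a, b). Then v is not identically zero on (a, b). -/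
open Set Filter MeasureTheory intervalIntegral
open scoped Topology

noncomputable section

/-- Nondegeneracy lemma: if `L` is smooth with finitely many zeros on `(a,b)` and `J` is smooth
and not identically zero on `(a,b)` (with the stated integrability), then
`v(x) = J(x) + L(x) ∫_x^b J(r) exp(∫_x^r L(s) ds) dr` is not identically zero on `(a,b)`. -/
theorem nondegeneracy_of_observable (a b : ℝ) (hab : a < b) (J L : ℝ → ℝ)
    (hJ : ContDiffOn ℝ (⊤ : ℕ∞) J (Set.Ioo a b)) (hL : ContDiffOn ℝ (⊤ : ℕ∞) L (Set.Ioo a b))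
    (hLzeros : {x | x ∈ Set.Ioo a b ∧ L x = 0}.Finite)
    (hJne : ∃ x ∈ Set.Ioo a b, J x ≠ 0)
    (hint : ∀ x ∈ Set.Ioo a b,
      IntegrableOn L (Set.Ioo x b) volume ∧
      IntegrableOn (fun r => J r * Real.exp (∫ s in x..r, L s)) (Set.Ioo x b) volume) :
    ∃ x ∈ Set.Ioo a b,
      J x + L x * (∫ r in x..b, J r * Real.exp (∫ s in x..r, L s)) ≠ 0 := by
  by_contra hcon
  push_neg at hcon
  obtain ⟨x₀, hx₀, hJx₀⟩ := hJne
  set c : ℝ := (a + x₀) / 2 with hcdef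
  have hax₀ : a < x₀ := hx₀.1
  have hac : a < c := by simp only [hcdef]; linarith
  have hcx₀ : c < x₀ := by simp only [hcdef]; linarith
  have hcb : c < b := hcx₀.trans hx₀.2
  have hcmem : c ∈ Set.Ioo a b := ⟨hac, hcb⟩
  obtain ⟨hLint, hgint0⟩ := hint c hcmem
  -- notation
  set ℓ : ℝ → ℝ := fun x => ∫ s in c..x, L s with hℓdef
  set g : ℝ → ℝ := fun r => J r * Real.exp (ℓ r) with hgdef
  have hgint : IntegrableOn g (Set.Ioo c b) volume := hgint0
  -- interval integrability on subintervals of [c, b]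
  have hLIoc : IntegrableOn L (Set.Ioc c b) volume :=
    hLint.congr_set_ae Ioo_ae_eq_Ioc.symm
  have hgIoc : IntegrableOn g (Set.Ioc c b) volume :=
    hgint.congr_set_ae Ioo_ae_eq_Ioc.symm
  have hLcb : IntervalIntegrable L volume c b :=
    (intervalIntegrable_iff_integrableOn_Ioc_of_le hcb.le).mpr hLIoc
  have hgcb : IntervalIntegrable g volume c b :=
    (intervalIntegrable_iff_integrableOn_Ioc_of_le hcb.le).mpr hgIoc
  have hLuv : ∀ u ∈ Set.Icc c b, ∀ v ∈ Set.Icc c b, IntervalIntegrable L volume u v := by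
    intro u hu v hv
    refine hLcb.mono_set (uIcc_subset_uIcc ?_ ?_) <;> rw [uIcc_of_le hcb.le] <;> assumption
  have hguv : ∀ u ∈ Set.Icc c b, ∀ v ∈ Set.Icc c b, IntervalIntegrable g volume u v := by
    intro u hu v hv
    refine hgcb.mono_set (uIcc_subset_uIcc ?_ ?_) <;> rw [uIcc_of_le hcb.le] <;> assumption
  -- splitting identity for ℓ
  have hℓsub : ∀ x ∈ Set.Icc c b, ∀ r ∈ Set.Icc c b, (∫ s in x..r, L s) = ℓ r - ℓ x := by
    intro x hx r hr
    have := intervalIntegral.integral_add_adjacent_intervals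
      (hLuv c ⟨le_refl c, hcb.le⟩ x hx) (hLuv x hx r hr)
    simp only [hℓdef]
    linarith [this]
  -- continuity facts
  have hJca : ∀ x ∈ Set.Ioo a b, ContinuousAt J x := fun x hx =>
    hJ.continuousOn.continuousAt (Ioo_mem_nhds hx.1 hx.2)
  have hLca : ∀ x ∈ Set.Ioo a b, ContinuousAt L x := fun x hx =>
    hL.continuousOn.continuousAt (Ioo_mem_nhds hx.1 hx.2)
  have hIoo_sub : Set.Ioo c b ⊆ Set.Ioo a b := Set.Ioo_subset_Ioo hac.le le_rfl
  -- derivative of ℓ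
  have hℓderiv : ∀ x ∈ Set.Ioo c b, HasDerivAt ℓ (L x) x := by
    intro x hx
    exact intervalIntegral.integral_hasDerivAt_right
      (hLuv c ⟨le_refl c, hcb.le⟩ x ⟨hx.1.le, hx.2.le⟩)
      (ContinuousAt.stronglyMeasurableAtFilter isOpen_Ioo hLca x (hIoo_sub hx))
      (hLca x (hIoo_sub hx))
  -- continuity of g on Ioo c b
  have hgca : ∀ x ∈ Set.Ioo c b, ContinuousAt g x := by
    intro x hx
    exact (hJca x (hIoo_sub hx)).mul
      (Real.continuous_exp.continuousAt.comp (hℓderiv x hx).continuousAt)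
  -- primitive of g
  set Φ : ℝ → ℝ := fun x => ∫ r in c..x, g r with hΦdef
  set W : ℝ → ℝ := fun x => Φ b - Φ x with hWdef
  set U : ℝ → ℝ := fun x => W x * Real.exp (-ℓ x) with hUdef
  have hΦderiv : ∀ x ∈ Set.Ioo c b, HasDerivAt Φ (g x) x := by
    intro x hx
    exact intervalIntegral.integral_hasDerivAt_right
      (hguv c ⟨le_refl c, hcb.le⟩ x ⟨hx.1.le, hx.2.le⟩)
      (ContinuousAt.stronglyMeasurableAtFilter isOpen_Ioo hgca x hx)
      (hgca x hx)
  have hWval : ∀ x ∈ Set.Icc c b, W x = ∫ r in x..b, g r := by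
    intro x hx
    have := intervalIntegral.integral_add_adjacent_intervals
      (hguv c ⟨le_refl c, hcb.le⟩ x hx) (hguv x hx b ⟨hcb.le, le_refl b⟩)
    simp only [hWdef, hΦdef]
    linarith [this]
  -- key relation from v ≡ 0
  have hrel : ∀ x ∈ Set.Ioo c b, g x + L x * W x = 0 := by
    intro x hx
    have h1 := hcon x (hIoo_sub hx)
    have h2 : (∫ r in x..b, J r * Real.exp (∫ s in x..r, L s))
        = Real.exp (-ℓ x) * ∫ r in x..b, g r := by
      rw [← intervalIntegral.integral_const_mul]
      apply intervalIntegral.integral_congr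
      intro r hr
      rw [uIcc_of_le hx.2.le] at hr
      have hxmem : x ∈ Set.Icc c b := ⟨hx.1.le, hx.2.le⟩
      have hrmem : r ∈ Set.Icc c b := ⟨hx.1.le.trans hr.1, hr.2⟩
      show J r * Real.exp (∫ s in x..r, L s) = Real.exp (-ℓ x) * (J r * Real.exp (ℓ r))
      rw [hℓsub x hxmem r hrmem, Real.exp_sub, Real.exp_neg]
      ring
    rw [h2, ← hWval x ⟨hx.1.le, hx.2.le⟩] at h1
    have hexp : Real.exp (ℓ x) * Real.exp (-ℓ x) = 1 := by
      rw [← Real.exp_add]; simp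
    show J x * Real.exp (ℓ x) + L x * W x = 0
    linear_combination Real.exp (ℓ x) * h1 + (-(L x * W x)) * hexp
  -- U has zero derivative on Ioo c b
  have hU0 : ∀ x ∈ Set.Ioo c b, HasDerivAt U 0 x := by
    intro x hx
    have hW' : HasDerivAt W (-(g x)) x := (hΦderiv x hx).const_sub (Φ b)
    have hE : HasDerivAt (fun y => Real.exp (-ℓ y)) (Real.exp (-ℓ x) * -L x) x :=
      ((hℓderiv x hx).neg).exp
    have hU : HasDerivAt U (-(g x) * Real.exp (-ℓ x) + W x * (Real.exp (-ℓ x) * -L x)) x :=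
      hW'.mul hE
    have h0 : -(g x) * Real.exp (-ℓ x) + W x * (Real.exp (-ℓ x) * -L x) = 0 := by
      have h := hrel x hx
      linear_combination (-Real.exp (-ℓ x)) * h
    exact h0 ▸ hU
  -- U is constant on (x₀, b): U y = U x₀
  have hx₀mem : x₀ ∈ Set.Ioo c b := ⟨hcx₀, hx₀.2⟩
  have hconst : ∀ y ∈ Set.Ioo x₀ b, U y = U x₀ := by
    intro y hy
    have hsub : Set.Icc x₀ y ⊆ Set.Ioo c b := fun z hz =>
      ⟨hcx₀.trans_le hz.1, hz.2.trans_lt hy.2⟩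
    have hcontU : ContinuousOn U (Set.Icc x₀ y) := fun z hz =>
      (hU0 z (hsub hz)).continuousAt.continuousWithinAt
    exact constant_of_has_deriv_right_zero hcontU
      (fun z hz => (hU0 z (hsub (Set.Ico_subset_Icc_self hz))).hasDerivWithinAt)
      y (Set.right_mem_Icc.mpr hy.1.le)
  -- U tends to 0 at b from the left
  have hvol : (volume : Measure ℝ) {b} = 0 := Real.volume_singleton
  have hΦb : ContinuousWithinAt Φ (Set.Icc c b) b := by
    apply intervalIntegral.continuousWithinAt_primitive hvol
    simpa [min_self, max_eq_right hcb.le] using hgcb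
  have hℓb : ContinuousWithinAt ℓ (Set.Icc c b) b := by
    apply intervalIntegral.continuousWithinAt_primitive hvol
    simpa [min_self, max_eq_right hcb.le] using hLcb
  have hUb : ContinuousWithinAt U (Set.Icc c b) b := by
    exact (continuousWithinAt_const.sub hΦb).mul
      (Real.continuous_exp.continuousAt.comp_continuousWithinAt hℓb.neg)
  have hUbval : U b = 0 := by simp [hUdef, hWdef]
  have hUlim : Tendsto U (𝓝[Set.Ioo x₀ b] b) (𝓝 0) := by
    have hmono : 𝓝[Set.Ioo x₀ b] b ≤ 𝓝[Set.Icc c b] b :=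
      nhdsWithin_mono b (fun z hz => ⟨hcx₀.le.trans hz.1.le, hz.2.le⟩)
    have := hUb.tendsto
    rw [hUbval] at this
    exact this.mono_left hmono
  haveI : (𝓝[Set.Ioo x₀ b] b).NeBot := right_nhdsWithin_Ioo_neBot hx₀.2
  have hUconstlim : Tendsto U (𝓝[Set.Ioo x₀ b] b) (𝓝 (U x₀)) := by
    have hev : ∀ᶠ y in 𝓝[Set.Ioo x₀ b] b, U y = U x₀ :=
      eventually_nhdsWithin_of_forall hconst
    exact tendsto_const_nhds.congr' (hev.mono fun y hy => hy.symm)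
  have hUx₀ : U x₀ = 0 := tendsto_nhds_unique hUconstlim hUlim
  -- conclude
  have hWx₀ : W x₀ = 0 := by
    have := hUx₀
    simp only [hUdef] at this
    rcases mul_eq_zero.mp this with h | h
    · exact h
    · exact absurd h (Real.exp_ne_zero _)
  have hgx₀ : g x₀ = 0 := by
    have := hrel x₀ hx₀mem
    rw [hWx₀] at this
    linarith
  simp only [hgdef] at hgx₀
  rcases mul_eq_zero.mp hgx₀ with h | h
  · exact hJx₀ h
  · exact Real.exp_ne_zero _ h
end
end
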